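/- arXiv:1809.10225 — 2 statements merged into one kernel-verified Lean document; each statement's English description precedes it below -/
import Mathlib

section
/- If (q-1)/d is odd and P, Q are monic irreducible polynomials in F_q[t] with deg(P) even or deg(Q) even, then (P/Q)_d = (Q/P)_d; if both deg(P) and deg(Q) are odd, then (P/Q)_d = -(Q/P)_d. -/
open Polynomial
open scoped Classical

noncomputable def resSym (F : Type) [Field F] [Fintype F] (d : ℕ) (P a : F[X]) : F :=
  if h : ∃ ζ : F, ζ ^ d = 1 ∧ P ∣ a ^ ((Fintype.card F ^ P.natDegree - 1) / d) - C ζ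
  then h.choose else 0

lemma frobAlg (F L : Type*) [Field F] [Fintype F] [Field L] [Algebra F L] (n : ℕ) :
    ∃ g : L →ₐ[F] L, ∀ x : L, g x = x ^ (Fintype.card F ^ n) := by
  obtain ⟨p, hp⟩ := CharP.exists F
  haveI := hp
  haveI hpp : Fact p.Prime := ⟨CharP.char_is_prime F p⟩
  obtain ⟨f, _, hf⟩ := FiniteField.card F p
  haveI : CharP L p := charP_of_injective_algebraMap (algebraMap F L).injective p
  refine ⟨AlgHom.mk' (iterateFrobenius L p (f * n)) ?_,
    fun x => by show iterateFrobenius L p (f * n) x = _;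
                rw [iterateFrobenius_def, hf, pow_mul]⟩
  intro c x
  simp only [iterateFrobenius_def, Algebra.smul_def, mul_pow, ← map_pow, pow_mul, ← hf,
    FiniteField.pow_card_pow]

lemma resSym_eq (F : Type) [Field F] [Fintype F] (d : ℕ) (P a : F[X])
    (hP : 0 < P.natDegree) {ζ : F} (h1 : ζ ^ d = 1)
    (h2 : P ∣ a ^ ((Fintype.card F ^ P.natDegree - 1) / d) - C ζ) :
    resSym F d P a = ζ := by
  have hex : ∃ ζ : F, ζ ^ d = 1 ∧
      P ∣ a ^ ((Fintype.card F ^ P.natDegree - 1) / d) - C ζ := ⟨ζ, h1, h2⟩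
  rw [resSym, dif_pos hex]
  obtain ⟨h1', h2'⟩ := hex.choose_spec
  set ζ' := hex.choose
  have hzz : P ∣ C ζ - C ζ' := by
    have := dvd_sub h2' h2
    simpa using this
  by_contra hne
  have hC0 : C ζ - C ζ' ≠ 0 := by
    rw [sub_ne_zero]
    exact fun h => (Ne.symm hne) (C_injective h)
  have := Polynomial.degree_le_of_dvd hzz hC0
  have h2d : (C ζ - C ζ').degree ≤ 0 := by
    rw [← Polynomial.C_sub]; exact Polynomial.degree_C_le
  have : P.degree ≤ 0 := le_trans this h2d
  rw [Polynomial.degree_le_zero_iff] at this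
  rw [this] at hP
  simp at hP

lemma key (F : Type) [Field F] [Fintype F] (d : ℕ) (hd0 : 0 < d)
    (hd : d ∣ Fintype.card F - 1)
    (P Q : F[X]) (hP : P.Monic) (hQ : Q.Monic) (hPirr : Irreducible P)
    (hQirr : Irreducible Q) (hPQ : P ≠ Q)
    (L : Type*) [Field L] [Algebra F L] (hsplit : (P.map (algebraMap F L)).Splits) :
    ∃ ζ : F, ζ ^ d = 1 ∧ P ∣ Q ^ ((Fintype.card F ^ P.natDegree - 1) / d) - C ζ ∧
      algebraMap F L ζ =
        (((P.map (algebraMap F L)).roots).map (fun β => aeval β Q)).prod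
          ^ ((Fintype.card F - 1) / d) := by
  set q := Fintype.card F with hqdef
  have hq1 : 1 < q := Fintype.one_lt_card
  set m := P.natDegree with hm
  have hm0 : 0 < m := hPirr.natDegree_pos
  set t := (q - 1) / d with ht
  have htd : d * t = q - 1 := Nat.mul_div_cancel' hd
  set s := ∑ i ∈ Finset.range m, q ^ i with hs
  have hgs : (q - 1) * s = q ^ m - 1 := by
    have h1 : (1:ℕ) ≤ q ^ m := Nat.one_le_pow _ _ (by omega)
    have h2 := geom_sum_mul (q : ℤ) m
    zify [hq1.le, h1]
    rw [hs]
    push_cast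
    linear_combination h2
  set e := s * t with he
  have hde : d * e = q ^ m - 1 := by
    rw [he, ← hgs, ← htd]; ring
  have heq : (q ^ m - 1) / d = e := by rw [← hde, Nat.mul_div_cancel_left _ hd0]
  -- the field K = F[X]/(P)
  haveI : Fact (Irreducible P) := ⟨hPirr⟩
  have hP0 : P ≠ 0 := hPirr.ne_zero
  let K := AdjoinRoot P
  haveI : Module.Finite F K := Module.Finite.of_basis (AdjoinRoot.powerBasis hP0).basis
  haveI : Finite K := Module.finite_of_finite F
  haveI : Fintype K := Fintype.ofFinite K
  have hcardK : Fintype.card K = q ^ m := by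
    rw [Module.card_eq_pow_finrank (K := F) (V := K), (AdjoinRoot.powerBasis hP0).finrank,
      AdjoinRoot.powerBasis_dim]
  have hndvd : ¬ P ∣ Q := by
    intro hdvd
    exact hPQ (eq_of_monic_of_associated hP hQ (hPirr.associated_of_dvd hQirr hdvd))
  set u : K := AdjoinRoot.mk P Q with hu
  have hu0 : u ≠ 0 := by
    rw [hu, Ne, AdjoinRoot.mk_eq_zero]; exact hndvd
  have hucard : u ^ (q ^ m - 1) = 1 := by
    rw [← hcardK]; exact FiniteField.pow_card_sub_one_eq_one u hu0
  set b : K := u ^ s with hb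
  -- b is fixed by the q-power Frobenius
  have hbq : b ^ q = b := by
    have hsq : s * q + 1 = s + q ^ m := by
      have h1 : s * q = ∑ i ∈ Finset.range m, q ^ (i + 1) := by
        rw [hs, Finset.sum_mul]; exact Finset.sum_congr rfl fun i _ => (pow_succ q i).symm
      have h2 := Finset.sum_range_succ' (fun i => q ^ i) m
      have h3 := Finset.sum_range_succ (fun i => q ^ i) m
      rw [pow_zero] at h2
      omega
    have huqm : u ^ (q ^ m) = u := by
      have : q ^ m - 1 + 1 = q ^ m := Nat.succ_pred_eq_of_pos (Nat.one_le_pow _ _ (by omega))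
      rw [← this, pow_add, hucard, one_mul, pow_one]
    have : b ^ q * u = b * u := by
      rw [hb, ← pow_mul, ← pow_succ, hsq, pow_add, huqm]
    exact mul_right_cancel₀ hu0 this
  -- b lies in the image of F
  obtain ⟨v, hv⟩ : ∃ v : F, algebraMap F K v = b := by
    classical
    set f : K[X] := X ^ q - X with hf
    have hf0 : f ≠ 0 := FiniteField.X_pow_card_sub_X_ne_zero K hq1
    have hdeg : f.natDegree = q := FiniteField.X_pow_card_sub_X_natDegree_eq K hq1
    have hmem : ∀ c : F, algebraMap F K c ∈ f.roots.toFinset := by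
      intro c
      rw [Multiset.mem_toFinset, mem_roots hf0]
      simp only [IsRoot.def, hf, eval_sub, eval_pow, eval_X, sub_eq_zero, ← map_pow]
      rw [hqdef, FiniteField.pow_card]
    have hsub : Finset.univ.image (algebraMap F K) ⊆ f.roots.toFinset := by
      intro y hy
      obtain ⟨c, _, rfl⟩ := Finset.mem_image.mp hy
      exact hmem c
    have hcard1 : (Finset.univ.image (algebraMap F K)).card = q := by
      rw [Finset.card_image_of_injective _ (algebraMap F K).injective, Finset.card_univ]
    have hcard2 : f.roots.toFinset.card ≤ q := by
      calc f.roots.toFinset.card ≤ Multiset.card f.roots := Multiset.toFinset_card_le _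
        _ ≤ f.natDegree := Polynomial.card_roots' f
        _ = q := hdeg
    have heqset : Finset.univ.image (algebraMap F K) = f.roots.toFinset :=
      Finset.eq_of_subset_of_card_le hsub (by omega)
    have hbmem : b ∈ f.roots.toFinset := by
      rw [Multiset.mem_toFinset, mem_roots hf0]
      simp only [IsRoot.def, hf, eval_sub, eval_pow, eval_X, sub_eq_zero, hbq]
    rw [← heqset] at hbmem
    obtain ⟨v, _, hv⟩ := Finset.mem_image.mp hbmem
    exact ⟨v, hv⟩
  refine ⟨v ^ t, ?_, ?_, ?_⟩
  · -- (v^t)^d = 1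
    apply (algebraMap F K).injective
    rw [map_one, map_pow, map_pow, hv, hb, ← pow_mul, ← pow_mul, ← hucard]
    congr 1
    rw [← hde, he]; ring
  · -- divisibility
    rw [heq, ← AdjoinRoot.mk_eq_zero, map_sub, map_pow]
    have hCv : AdjoinRoot.mk P (C (v ^ t)) = algebraMap F K (v ^ t) := by
      rw [AdjoinRoot.algebraMap_eq]; rfl
    rw [hCv, map_pow, hv, hb, ← pow_mul, ← he, sub_eq_zero]
  · -- value in L
    have hdegP : P.degree ≠ 0 := by
      intro h
      have h0 : P.natDegree = 0 := natDegree_eq_of_degree_eq_some (by exact_mod_cast h)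
      omega
    obtain ⟨α, hα⟩ := hsplit.exists_eval_eq_zero (by rwa [degree_map])
    have hα2 : aeval α P = 0 := by rwa [aeval_def, ← eval_map]
    set φ := AdjoinRoot.liftAlgHom P (Algebra.ofId F L) α hα2 with hφ
    have hφroot : φ (AdjoinRoot.root P) = α := AdjoinRoot.liftAlgHom_root P (Algebra.ofId F L) α hα2
    have hφmk : ∀ g : F[X], φ (AdjoinRoot.mk P g) = aeval α g := fun g => AdjoinRoot.liftAlgHom_mk P (Algebra.ofId F L) α hα2 g
    have haevalpow : ∀ (R : F[X]) (i : ℕ) (x : L),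
        (aeval x R) ^ q ^ i = aeval (x ^ q ^ i) R := by
      intro R i
      induction i with
      | zero => intro x; simp
      | succ i ih =>
        intro x
        obtain ⟨g, hg⟩ := frobAlg F L 1
        calc (aeval x R) ^ q ^ (i+1) = ((aeval x R) ^ q ^ i) ^ q := by
              rw [← pow_mul, pow_succ]
          _ = (aeval (x ^ q ^ i) R) ^ q := by rw [ih x]
          _ = g (aeval (x ^ q ^ i) R) := by rw [hg, pow_one, hqdef]
          _ = aeval (g (x ^ q ^ i)) R := (aeval_algHom_apply g _ R).symm
          _ = aeval ((x ^ q ^ i) ^ q) R := by rw [hg, pow_one, hqdef]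
          _ = aeval (x ^ q ^ (i+1)) R := by rw [← pow_mul, ← pow_succ]
    set ι := algebraMap F L with hι
    set Pm := P.map ι with hPm
    have hPm0 : Pm ≠ 0 := Polynomial.map_ne_zero hP0
    have hPmdeg : Pm.natDegree = m := natDegree_map ι
    have hsep : P.Separable := PerfectField.separable_of_irreducible hPirr
    have hnodup : Pm.roots.Nodup := nodup_roots hsep.map
    have hcardroots : Multiset.card Pm.roots = m := by
      rw [← hPmdeg]
      exact splits_iff_card_roots.mp hsplit
    have hrootmem : ∀ i : ℕ, α ^ q ^ i ∈ Pm.roots := by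
      intro i
      rw [mem_roots hPm0, IsRoot.def, hPm, eval_map, ← aeval_def, ← haevalpow P i α, hα2]
      exact zero_pow (by positivity)
    have hαqm : α ^ q ^ m = α := by
      have hroot : (AdjoinRoot.root P) ^ q ^ m = AdjoinRoot.root P := by
        rw [← hcardK]; exact FiniteField.pow_card _
      have h2 : φ (AdjoinRoot.root P ^ q ^ m) = φ (AdjoinRoot.root P) := by rw [hroot]
      rwa [map_pow, hφroot] at h2
    have hfrobfix : ∀ k, 0 < k → k < m → α ^ q ^ k = α → False := by
      intro k hk0 hkm hfix
      have hφinj : Function.Injective ⇑φ := φ.toRingHom.injective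
      have hrootk : (AdjoinRoot.root P) ^ q ^ k = AdjoinRoot.root P := by
        apply hφinj
        rw [map_pow, hφroot, hfix]
      obtain ⟨g, hg⟩ := frobAlg F K k
      have hgid : g = AlgHom.id F K := by
        apply AdjoinRoot.algHom_ext
        rw [hg, AlgHom.id_apply, ← hqdef]
        exact hrootk
      have hall : ∀ x : K, x ^ q ^ k = x := by
        intro x
        have := DFunLike.congr_fun hgid x
        rwa [hg, AlgHom.id_apply, ← hqdef] at this
      classical
      set fK : K[X] := X ^ q ^ k - X with hfK
      have hfK0 : fK ≠ 0 := by
        rw [hfK, hqdef]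
        exact FiniteField.X_pow_card_pow_sub_X_ne_zero K (by omega) hq1
      have hdegK : fK.natDegree = q ^ k := by
        rw [hfK, hqdef]
        exact FiniteField.X_pow_card_pow_sub_X_natDegree_eq K (by omega) hq1
      have hsub : (Finset.univ : Finset K) ⊆ fK.roots.toFinset := by
        intro x _
        rw [Multiset.mem_toFinset, mem_roots hfK0, IsRoot.def, hfK]
        simp [hall x]
      have hle : Fintype.card K ≤ q ^ k := by
        calc Fintype.card K = (Finset.univ : Finset K).card := Finset.card_univ.symm
          _ ≤ fK.roots.toFinset.card := Finset.card_le_card hsub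
          _ ≤ Multiset.card fK.roots := Multiset.toFinset_card_le _
          _ ≤ fK.natDegree := Polynomial.card_roots' fK
          _ = q ^ k := hdegK
      rw [hcardK] at hle
      exact absurd hle (not_le.mpr (Nat.pow_lt_pow_right hq1 hkm))
    have hne : ∀ i j, i < j → j < m → α ^ q ^ i ≠ α ^ q ^ j := by
      intro i j hij hjm heqq
      apply hfrobfix (i + (m - j)) (by omega) (by omega)
      have e1 : (α ^ q ^ i) ^ q ^ (m - j) = α ^ q ^ (i + (m - j)) := by
        rw [← pow_mul, ← pow_add]
      have e2 : (α ^ q ^ j) ^ q ^ (m - j) = α ^ q ^ m := by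
        rw [← pow_mul, ← pow_add]
        congr 2
        omega
      rw [← e1, heqq, e2, hαqm]
    have hinj : ∀ x ∈ Finset.range m, ∀ y ∈ Finset.range m,
        α ^ q ^ x = α ^ q ^ y → x = y := by
      intro i hi j hj hij
      rw [Finset.mem_range] at hi hj
      by_contra hnij
      rcases Nat.lt_or_ge i j with h | h
      · exact hne i j h hj hij
      · exact hne j i (by omega) hi hij.symm
    classical
    set T : Finset L := (Finset.range m).image (fun i => α ^ q ^ i) with hT
    have hTcard : T.card = m := by
      rw [hT, Finset.card_image_of_injOn hinj, Finset.card_range]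
    have hTsub : T ⊆ Pm.roots.toFinset := by
      intro x hx
      obtain ⟨i, _, rfl⟩ := Finset.mem_image.mp hx
      exact Multiset.mem_toFinset.mpr (hrootmem i)
    have hMcard : Pm.roots.toFinset.card = m := by
      rw [Multiset.toFinset_card_eq_card_iff_nodup.mpr hnodup, hcardroots]
    have hTeq : T = Pm.roots.toFinset :=
      Finset.eq_of_subset_of_card_le hTsub (by omega)
    have hprod : ((Pm.roots).map (fun β => aeval β Q)).prod
        = ∏ i ∈ Finset.range m, aeval (α ^ q ^ i) Q := by
      have h1 : Pm.roots.toFinset.prod (fun β => aeval β Q)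
          = ((Pm.roots).map (fun β => aeval β Q)).prod := by
        rw [Finset.prod_eq_multiset_prod]
        congr 1
        rw [Multiset.toFinset_val, Multiset.dedup_eq_self.mpr hnodup]
      rw [← h1, ← hTeq, hT, Finset.prod_image hinj]
    have hmain : algebraMap F L (v ^ t) = (aeval α Q) ^ e := by
      have h2 : algebraMap F K (v ^ t) = u ^ e := by
        rw [map_pow, hv, hb, ← pow_mul, ← he]
      calc algebraMap F L (v ^ t) = φ (algebraMap F K (v ^ t)) := (φ.commutes _).symm
        _ = φ (u ^ e) := by rw [h2]
        _ = (φ u) ^ e := map_pow φ u e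
        _ = (aeval α Q) ^ e := by rw [hu, hφmk]
    rw [hmain]
    calc (aeval α Q) ^ e = ((aeval α Q) ^ s) ^ t := by rw [← pow_mul, he]
      _ = (∏ i ∈ Finset.range m, (aeval α Q) ^ q ^ i) ^ t := by
          rw [Finset.prod_pow_eq_pow_sum]
      _ = (∏ i ∈ Finset.range m, aeval (α ^ q ^ i) Q) ^ t := by
          congr 1
          exact Finset.prod_congr rfl fun i _ => haevalpow Q i α
      _ = ((Pm.roots).map (fun β => aeval β Q)).prod ^ t := by rw [hprod]

theorem stmt5 (F : Type) [Field F] [Fintype F] (d : ℕ) (hd0 : 0 < d)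
    (hd : d ∣ Fintype.card F - 1) (ho : Odd ((Fintype.card F - 1) / d))
    (P Q : F[X]) (hP : P.Monic) (hQ : Q.Monic) (hPirr : Irreducible P)
    (hQirr : Irreducible Q) (hPQ : P ≠ Q) :
    ((Even P.natDegree ∨ Even Q.natDegree) → resSym F d Q P = resSym F d P Q) ∧
    (Odd P.natDegree → Odd Q.natDegree → resSym F d Q P = - resSym F d P Q) := by
  classical
  set q := Fintype.card F with hqdef
  set t := (q - 1) / d with ht
  set L := (P * Q).SplittingField with hL
  have hPQ0 : P * Q ≠ 0 := mul_ne_zero hPirr.ne_zero hQirr.ne_zero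
  have hsP : (P.map (algebraMap F L)).Splits :=
    Splits.of_dvd (SplittingField.splits _) (Polynomial.map_ne_zero hPQ0) (Polynomial.map_dvd _ (dvd_mul_right P Q))
  have hsQ : (Q.map (algebraMap F L)).Splits :=
    Splits.of_dvd (SplittingField.splits _) (Polynomial.map_ne_zero hPQ0) (Polynomial.map_dvd _ (dvd_mul_left Q P))
  obtain ⟨ζP, hζP1, hζP2, hζP3⟩ := key F d hd0 hd P Q hP hQ hPirr hQirr hPQ L hsP
  obtain ⟨ζQ, hζQ1, hζQ2, hζQ3⟩ := key F d hd0 hd Q P hQ hP hQirr hPirr (Ne.symm hPQ) L hsQ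
  have hrP : resSym F d P Q = ζP := resSym_eq F d P Q hPirr.natDegree_pos hζP1 hζP2
  have hrQ : resSym F d Q P = ζQ := resSym_eq F d Q P hQirr.natDegree_pos hζQ1 hζQ2
  set ι := algebraMap F L with hι
  set m := P.natDegree with hm
  set n := Q.natDegree with hn
  set RP := (P.map ι).roots with hRP
  set RQ := (Q.map ι).roots with hRQ
  have hRPcard : Multiset.card RP = m := by
    rw [hRP, hm, ← natDegree_map ι (p := P)]
    exact splits_iff_card_roots.mp hsP
  have hRQcard : Multiset.card RQ = n := by
    rw [hRQ, hn, ← natDegree_map ι (p := Q)]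
    exact splits_iff_card_roots.mp hsQ
  have hQprod : Q.map ι = (RQ.map (fun γ => X - C γ)).prod :=
    hsQ.eq_prod_roots_of_monic (hQ.map ι)
  have hPprod : P.map ι = (RP.map (fun β => X - C β)).prod :=
    hsP.eq_prod_roots_of_monic (hP.map ι)
  have hWP : (RP.map (fun β => aeval β Q)).prod
      = (RP.map (fun β => (RQ.map (fun γ => β - γ)).prod)).prod := by
    congr 1
    apply Multiset.map_congr rfl
    intro β _
    rw [aeval_def, ← eval_map, hQprod, eval_multiset_prod, Multiset.map_map]
    congr 1
    apply Multiset.map_congr rfl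
    intro γ _
    simp
  have hWQ : (RQ.map (fun γ => aeval γ P)).prod
      = (RQ.map (fun γ => (RP.map (fun β => γ - β)).prod)).prod := by
    congr 1
    apply Multiset.map_congr rfl
    intro γ _
    rw [aeval_def, ← eval_map, hPprod, eval_multiset_prod, Multiset.map_map]
    congr 1
    apply Multiset.map_congr rfl
    intro β _
    simp
  have hneg : ∀ γ : L, (RP.map (fun β => γ - β)).prod
      = (-1 : L) ^ m * (RP.map (fun β => β - γ)).prod := by
    intro γ
    have h1 : RP.map (fun β => γ - β) = RP.map (fun β => (-1 : L) * (β - γ)) :=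
      Multiset.map_congr rfl (by intros; ring)
    rw [h1, Multiset.prod_map_mul, Multiset.map_const', Multiset.prod_replicate, hRPcard]
  have hswap : (RQ.map (fun γ => (RP.map (fun β => β - γ)).prod)).prod
      = (RP.map (fun β => (RQ.map (fun γ => β - γ)).prod)).prod :=
    Multiset.prod_map_prod_map RQ RP
  have hWQP : (RQ.map (fun γ => aeval γ P)).prod
      = (-1 : L) ^ (m * n) * (RP.map (fun β => aeval β Q)).prod := by
    rw [hWQ]
    calc (RQ.map (fun γ => (RP.map (fun β => γ - β)).prod)).prod
        = (RQ.map (fun γ => (-1 : L) ^ m * (RP.map (fun β => β - γ)).prod)).prod := by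
          congr 1
          exact Multiset.map_congr rfl (fun γ _ => hneg γ)
      _ = ((RQ.map (fun _ => (-1 : L) ^ m)).prod)
            * (RQ.map (fun γ => (RP.map (fun β => β - γ)).prod)).prod :=
          Multiset.prod_map_mul
      _ = (-1 : L) ^ (m * n) * (RP.map (fun β => aeval β Q)).prod := by
          rw [Multiset.map_const', Multiset.prod_replicate, hRQcard, ← pow_mul, hswap, ← hWP]
  have hfin : ι ζQ = ι ((-1 : F) ^ (m * n * t) * ζP) := by
    rw [map_mul, map_pow, map_neg, map_one, hζQ3, hζP3, hWQP, mul_pow, ← pow_mul]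
  have hrel : ζQ = (-1 : F) ^ (m * n * t) * ζP := ι.injective hfin
  constructor
  · intro hev
    rw [hrQ, hrP, hrel]
    have heven : Even (m * n * t) := by
      rcases hev with h | h
      · exact (h.mul_right n).mul_right t
      · exact (h.mul_left m).mul_right t
    rw [heven.neg_one_pow, one_mul]
  · intro hom hon
    rw [hrQ, hrP, hrel]
    have hodd : Odd (m * n * t) := (hom.mul hon).mul ho
    rw [hodd.neg_one_pow, neg_one_mul]
end

section
/- Let M = (m_{jk}) be an n×n complex matrix with zero diagonal, all off-diagonal entries roots of unity of modulus 1 with m_{jk} = ±m_{kj} for all j,k, and suppose for some integer s with 1 ≤ s ≤ n the diagonal entries of M·conj(M) consist of s occurrences of n+1-2s and n-s occurrences of n-1. Then M can be conjugated by a permutation matrix into block form [[A, B],[B^t, S]] where A is s×s skew-symmetric, S is (n-s)×(n-s) symmetric, both with zero diagonal and off-diagonal entries of modulus 1. -/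
open scoped Classical

theorem stmt10 (n s : ℕ) (hs1 : 1 ≤ s) (hsn : s ≤ n) (M : Matrix (Fin n) (Fin n) ℂ)
    (hdiag : ∀ i, M i i = 0) (hoff : ∀ i j, i ≠ j → ‖M i j‖ = 1)
    (hpm : ∀ j k, M j k = M k j ∨ M j k = - M k j)
    (T : Finset (Fin n)) (hT : T.card = s)
    (hMM : ∀ j, (M * M.map (starRingEnd ℂ)) j j =
      if j ∈ T then (n : ℂ) + 1 - 2 * (s : ℂ) else (n : ℂ) - 1) :
    ∃ σ : Equiv.Perm (Fin n),
      (∀ i j : Fin n, (i : ℕ) < s → (j : ℕ) < s → M (σ j) (σ i) = - M (σ i) (σ j)) ∧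
      (∀ i j : Fin n, s ≤ (i : ℕ) → s ≤ (j : ℕ) → M (σ j) (σ i) = M (σ i) (σ j)) := by
  have hne : ∀ i j : Fin n, i ≠ j → M i j ≠ 0 := by
    intro i j h h0
    have := hoff i j h
    rw [h0] at this
    simp at this
  set F : Fin n → Finset (Fin n) :=
    fun j => Finset.univ.filter (fun k => k ≠ j ∧ M j k = - M k j) with hF
  -- compute the diagonal entries
  have hMMval : ∀ j, (M * M.map (starRingEnd ℂ)) j j
      = (n : ℂ) - 1 - 2 * ((F j).card : ℂ) := by
    intro j
    rw [Matrix.mul_apply]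
    have hterm : ∀ k : Fin n, M j k * (M.map (starRingEnd ℂ)) k j =
        (if k = j then 0 else 1)
          - 2 * (if k ∈ F j then (1 : ℂ) else 0) := by
      intro k
      by_cases hkj : k = j
      · subst hkj
        have hkF : k ∉ F k := by simp [hF]
        rw [if_pos rfl, if_neg hkF, Matrix.map_apply, hdiag]
        ring
      · have habk : M j k * (starRingEnd ℂ) (M j k) = 1 := by
          rw [Complex.mul_conj, ← Complex.sq_norm, hoff j k (Ne.symm hkj)]
          norm_num
        rcases hpm j k with hsym | hanti
        · have hns : ¬ (M j k = - M k j) := by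
            intro h
            apply hne j k (Ne.symm hkj)
            have h2 : (2 : ℂ) * M j k = 0 := by linear_combination h + hsym
            have h3 : M j k = 0 := by simpa using h2
            exact h3
          have hkF : k ∉ F j := by
            simp only [hF, Finset.mem_filter, Finset.mem_univ, true_and, not_and]
            exact fun _ => hns
          rw [if_neg hkj, if_neg hkF, Matrix.map_apply, ← hsym, habk]
          ring
        · have hkj' : M k j = - M j k := by linear_combination hanti
          have hkF : k ∈ F j := by
            simp only [hF, Finset.mem_filter, Finset.mem_univ, true_and]
            exact ⟨hkj, hanti⟩
          rw [if_neg hkj, if_pos hkF, Matrix.map_apply, hkj', map_neg, mul_neg, habk]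
          ring
    rw [Finset.sum_congr rfl (fun k _ => hterm k)]
    rw [Finset.sum_sub_distrib, ← Finset.mul_sum]
    have h1 : (∑ k : Fin n, if k = j then (0:ℂ) else 1) = (n : ℂ) - 1 := by
      have he : ∀ k : Fin n, (if k = j then (0:ℂ) else 1)
          = 1 - (if k = j then 1 else 0) := by
        intro k; by_cases h : k = j <;> simp [h]
      simp only [he, Finset.sum_sub_distrib, Finset.sum_const, Finset.card_univ,
        Fintype.card_fin, Finset.sum_ite_eq', Finset.mem_univ, if_pos]
      simp
    have h2 : (∑ k : Fin n, if k ∈ F j then (1:ℂ) else 0) = ((F j).card : ℂ) := by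
      rw [Finset.sum_ite_mem, Finset.univ_inter, Finset.sum_const]
      simp
    rw [h1, h2]
  -- cardinality facts
  have hcard0 : ∀ j ∉ T, (F j).card = 0 := by
    intro j hj
    have := (hMMval j).symm.trans (hMM j)
    rw [if_neg hj] at this
    have h2 : ((F j).card : ℂ) = 0 := by linear_combination -this / 2
    exact_mod_cast h2
  have hcards : ∀ j ∈ T, (F j).card = s - 1 := by
    intro j hj
    have := (hMMval j).symm.trans (hMM j)
    rw [if_pos hj] at this
    have h2 : ((F j).card + 1 : ℂ) = (s : ℂ) := by linear_combination -this / 2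
    have h3 : (((F j).card + 1 : ℕ) : ℂ) = ((s : ℕ) : ℂ) := by push_cast; linear_combination h2
    have h4 : (F j).card + 1 = s := Nat.cast_injective h3
    omega
  -- symmetric rows
  have hsym : ∀ j ∉ T, ∀ k, M j k = M k j := by
    intro j hj k
    by_cases hkj : k = j
    · subst hkj; rfl
    · rcases hpm j k with h | h
      · exact h
      · exfalso
        have hk : k ∈ F j := by
          simp only [hF, Finset.mem_filter, Finset.mem_univ, true_and]
          exact ⟨hkj, h⟩
        have := hcard0 j hj
        rw [Finset.card_eq_zero] at this
        rw [this] at hk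
        exact absurd hk (Finset.notMem_empty k)
  -- antisymmetric within T
  have hanti : ∀ j ∈ T, ∀ k ∈ T, k ≠ j → M j k = - M k j := by
    intro j hj k hk hkj
    have hsub : F j ⊆ T.erase j := by
      intro x hx
      simp only [hF, Finset.mem_filter, Finset.mem_univ, true_and] at hx
      rw [Finset.mem_erase]
      refine ⟨hx.1, ?_⟩
      by_contra hxT
      have h1 := hsym x hxT j
      have h0 : (2:ℂ) * M j x = 0 := by linear_combination hx.2 - h1
      exact hne j x (Ne.symm hx.1) (by simpa using h0)
    have hce : (T.erase j).card = s - 1 := by rw [Finset.card_erase_of_mem hj, hT]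
    have heq : F j = T.erase j :=
      Finset.eq_of_subset_of_card_le hsub (by rw [hcards j hj, hce])
    have hkF : k ∈ F j := by
      rw [heq, Finset.mem_erase]; exact ⟨hkj, hk⟩
    simp only [hF, Finset.mem_filter, Finset.mem_univ, true_and] at hkF
    exact hkF.2
  -- construct the permutation
  have hcompl : Tᶜ.card = n - s := by
    rw [Finset.card_compl, hT]; simp
  have hsplit : n = s + (n - s) := by omega
  let e3 : Fin s ≃ {x : Fin n // x ∈ T} := (T.orderIsoOfFin hT).toEquiv
  let e4 : Fin (n - s) ≃ {x : Fin n // x ∈ Tᶜ} := (Tᶜ.orderIsoOfFin hcompl).toEquiv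
  let e5 : {x : Fin n // x ∈ Tᶜ} ≃ {x : Fin n // ¬ x ∈ T} :=
    Equiv.subtypeEquivRight (fun x => Finset.mem_compl)
  let σ : Equiv.Perm (Fin n) :=
    (finCongr hsplit).trans <| finSumFinEquiv.symm.trans <|
      (Equiv.sumCongr e3 (e4.trans e5)).trans (Equiv.sumCompl (· ∈ T))
  have hσ1 : ∀ i : Fin n, (i : ℕ) < s → σ i ∈ T := by
    intro i hi
    have hcast : finCongr hsplit i = Fin.castAdd (n - s) ⟨(i : ℕ), hi⟩ := by
      apply Fin.ext
      show (i : ℕ) = (i : ℕ)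
      rfl
    show ((finCongr hsplit).trans <| finSumFinEquiv.symm.trans <|
      (Equiv.sumCongr e3 (e4.trans e5)).trans (Equiv.sumCompl (· ∈ T))) i ∈ T
    simp only [Equiv.trans_apply, hcast, finSumFinEquiv_symm_apply_castAdd,
      Equiv.sumCongr_apply, Sum.map_inl, Equiv.sumCompl_apply_inl]
    exact (e3 ⟨(i : ℕ), hi⟩).2
  have hσ2 : ∀ i : Fin n, s ≤ (i : ℕ) → σ i ∉ T := by
    intro i hi
    have hcast : finCongr hsplit i = Fin.natAdd s ⟨(i : ℕ) - s, by omega⟩ := by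
      apply Fin.ext
      show (i : ℕ) = s + ((i : ℕ) - s)
      omega
    show ((finCongr hsplit).trans <| finSumFinEquiv.symm.trans <|
      (Equiv.sumCongr e3 (e4.trans e5)).trans (Equiv.sumCompl (· ∈ T))) i ∉ T
    simp only [Equiv.trans_apply, hcast, finSumFinEquiv_symm_apply_natAdd,
      Equiv.sumCongr_apply, Sum.map_inr, Equiv.sumCompl_apply_inr]
    exact (e5 (e4 ⟨(i : ℕ) - s, by omega⟩)).2
  refine ⟨σ, ?_, ?_⟩
  · intro i j hi hj
    by_cases hij : i = j
    · subst hij; simp [hdiag]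
    · have hne' : σ i ≠ σ j := fun h => hij (σ.injective h)
      exact hanti (σ j) (hσ1 j hj) (σ i) (hσ1 i hi) hne'
  · intro i j hi hj
    exact hsym (σ j) (hσ2 j hj) (σ i)
end
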